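/- There exist constants C,c>0 such that for every N≥1, every m∈{0,…,N} and every M>0, P^{N,0,m}( max_{0≤j≤N} |L(j) − mj/N| ≤ M ) ≥ 1 − C·exp(−cM²/N). -/

import Mathlib

/-!
A bridge from `0` to `m` in `N` steps is determined by the set of its `m` up-steps, and the
uniform bridge measure is the uniform measure on these sets. Given the first `t` steps, the next
one goes up with probability `(m - L t) / (N - t)`, so `Z t = (L t - m t / N) / (N - t)` is a
martingale whose next value is one of two values at distance `1 / (N - t - 1)`. Hence `exp (λ Z)`
is a submartingale whose mean grows at most by the factor `1 + λ² / (N - t - 1)²` per step, and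
over the first `N / 2` steps `E exp (λ Z) ≤ exp (2 λ² / N)`. As `Z t ≥ M / N` whenever
`L t - m t / N ≥ M`, Doob's maximal inequality with `λ = M / 4` bounds the probability that
`L - m t / N` reaches `M` during the first half by `exp (-M² / (8 N))`. Lower deviations follow
by exchanging up- and down-steps (`m ↦ N - m`), the second half by reversing time, and the four
bounds add up to `C = 4`, `c = 1 / 8`.
-/

/-- A Bernoulli path on `{0,…,N}`: increments in `{0,1}`. -/
def IsBPath (N : ℕ) (L : Fin (N+1) → ℤ) : Prop :=
  ∀ j : Fin N, L j.succ = L j.castSucc ∨ L j.succ = L j.castSucc + 1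

/-- `Ω(N,x,y)`: Bernoulli paths from `x` to `y`. -/
def pathSet (N : ℕ) (x y : ℤ) : Set (Fin (N+1) → ℤ) :=
  {L | IsBPath N L ∧ L 0 = x ∧ L (Fin.last N) = y}

/-- Probability of the event `A` under the uniform measure on the finite set `Ω`. -/
noncomputable def unifProb {X : Type*} (Ω A : Set X) : ℝ :=
  ((Ω ∩ A).ncard : ℝ) / (Ω.ncard : ℝ)

open Finset Real

lemma add_mul_exp_le_of_mean {a b x y z : ℝ} (ha : 0 ≤ a) (hb : 0 ≤ b)
    (hz : (a + b) * z = a * x + b * y) :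
    (a + b) * exp z ≤ a * exp x + b * exp y := by
  rcases (add_nonneg ha hb).eq_or_lt with hab | hab
  · rw [← hab, zero_mul]
    positivity
  have hconv := convexOn_exp.2 (Set.mem_univ x) (Set.mem_univ y) (div_nonneg ha hab.le)
    (div_nonneg hb hab.le) (by field_simp)
  have hmean : a / (a + b) * x + b / (a + b) * y = z := by
    field_simp
    linarith
  simp only [smul_eq_mul, hmean] at hconv
  calc (a + b) * exp z ≤ (a + b) * (a / (a + b) * exp x + b / (a + b) * exp y) := by gcongr
    _ = a * exp x + b * exp y := by field_simp

lemma mul_exp_add_mul_exp_le_of_mean {a b x y z g : ℝ} (ha : 0 ≤ a) (hb : 0 ≤ b)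
    (hz : (a + b) * z = a * x + b * y) (hxy : |x - y| ≤ g) (hg : g ≤ 1) :
    a * exp x + b * exp y ≤ (1 + g ^ 2) * ((a + b) * exp z) := by
  rcases (add_nonneg ha hb).eq_or_lt with hab | hab
  · obtain ⟨rfl, rfl⟩ : a = 0 ∧ b = 0 := ⟨by linarith, by linarith⟩
    simp
  have hexp : ∀ w, |w| ≤ g → exp w ≤ 1 + w + g ^ 2 := fun w hw => by
    have := (abs_le.mp (abs_exp_sub_one_sub_id_le (hw.trans hg))).2
    nlinarith [sq_abs w, abs_nonneg w]
  -- `z` lies between `x` and `y`, so it is within `g` of both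
  have hclose : ∀ w c, (a + b) * (w - z) = c * (x - y) → |c| ≤ a + b → |w - z| ≤ g := by
    intro w c hw hc
    refine le_of_mul_le_mul_left ?_ hab
    calc (a + b) * |w - z| = |c| * |x - y| := by rw [← abs_of_pos hab, ← abs_mul, hw, abs_mul]
      _ ≤ (a + b) * g := mul_le_mul hc hxy (abs_nonneg _) hab.le
  have hx := hexp _ (hclose x b (by linear_combination -hz) (by rw [abs_of_nonneg hb]; linarith))
  have hy := hexp _ (hclose y (-a) (by linear_combination -hz)
    (by rw [abs_neg, abs_of_nonneg ha]; linarith))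
  calc a * exp x + b * exp y = exp z * (a * exp (x - z) + b * exp (y - z)) := by
        rw [exp_sub, exp_sub]; field_simp
    _ ≤ exp z * (a * (1 + (x - z) + g ^ 2) + b * (1 + (y - z) + g ^ 2)) := by gcongr
    _ = (1 + g ^ 2) * ((a + b) * exp z) := by linear_combination -exp z * hz

lemma unifProb_image {α β : Type*} {Ω : Finset α} {f : α → β} (hf : Set.InjOn f Ω)
    (A : Set β) [DecidablePred (· ∈ A)] :
    unifProb (f '' Ω) A = #{x ∈ Ω | f x ∈ A} / #Ω := by
  have hfilter : (Ω : Set α) ∩ f ⁻¹' A = ↑{x ∈ Ω | f x ∈ A} := by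
    ext
    simp
  rw [unifProb, ← Set.image_inter_preimage, hfilter,
    (hf.mono (coe_subset.mpr (filter_subset _ _))).ncard_image, hf.ncard_image,
    Set.ncard_coe_finset, Set.ncard_coe_finset]

namespace BernoulliBridge

/-- Bridges from `0` to `m` in `N` steps, each encoded by the set of times of its up-steps. -/
def bridges (N m : ℕ) : Finset (Finset ℕ) := (range N).powersetCard m

def height (t : ℕ) (S : Finset ℕ) : ℕ := #(S ∩ range t)

noncomputable def deviation (N m t : ℕ) (S : Finset ℕ) : ℝ := height t S - m * t / N

noncomputable def bridgeMartingale (N m t : ℕ) (S : Finset ℕ) : ℝ :=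
  deviation N m t S / (N - t)

def fiber (N m t : ℕ) (P : Finset ℕ) : Finset (Finset ℕ) :=
  {S ∈ bridges N m | S ∩ range t = P}

variable {N m t : ℕ} {S P : Finset ℕ}

lemma mem_bridges : S ∈ bridges N m ↔ S ⊆ range N ∧ #S = m := mem_powersetCard

lemma card_bridges : #(bridges N m) = N.choose m := by
  rw [bridges, card_powersetCard, card_range]

lemma height_succ (t : ℕ) (S : Finset ℕ) :
    height (t + 1) S = height t S + if t ∈ S then 1 else 0 := by
  rw [height, height, range_add_one]
  split_ifs with h
  · rw [inter_insert_of_mem h, card_insert_of_notMem (by simp)]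
  · rw [inter_insert_of_notMem h, add_zero]

lemma height_of_subset_range (h : S ⊆ range N) : height N S = #S := by
  rw [height, inter_eq_left.mpr h]

lemma abs_deviation_le (hS : S ∈ bridges N m) (ht : t ≤ N) : |deviation N m t S| ≤ m := by
  have hh : (height t S : ℝ) ≤ m := by
    exact_mod_cast (card_le_card inter_subset_left).trans (mem_bridges.mp hS).2.le
  refine abs_sub_le_of_nonneg_of_le (by positivity) hh (by positivity) ?_
  rcases (Nat.zero_le N).eq_or_lt with hN | hN
  · simp [← hN]
  rw [mul_div_assoc]
  exact mul_le_of_le_one_right (by positivity)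
    ((div_le_one (by exact_mod_cast hN)).mpr (by exact_mod_cast ht))

lemma card_fiber (hP : P ⊆ range t) (ht : t ≤ N) (hk : #P ≤ m) :
    #(fiber N m t P) = (N - t).choose (m - #P) := by
  rw [← Nat.card_Ico t N, ← card_powersetCard]
  refine card_nbij' (· \ range t) (P ∪ ·) (fun S hS => ?_) (fun T hT => ?_) (fun S hS => ?_)
    (fun T hT => ?_)
  · obtain ⟨hSb, rfl⟩ := mem_filter.mp hS
    obtain ⟨hSN, hSm⟩ := mem_bridges.mp hSb
    refine mem_powersetCard.mpr ⟨fun x hx => by grind, ?_⟩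
    have := card_sdiff_add_card_inter S (range t)
    dsimp only
    omega
  · obtain ⟨hTI, hTk⟩ := mem_powersetCard.mp hT
    have hdisj : Disjoint P T := by
      rw [disjoint_left]
      grind
    refine mem_filter.mpr ⟨mem_bridges.mpr ⟨fun x => by grind, ?_⟩, by ext; grind⟩
    rw [card_union_of_disjoint hdisj]
    omega
  · simpa only [← (mem_filter.mp hS).2, union_comm] using sdiff_union_inter S (range t)
  · have := (mem_powersetCard.mp hT).1
    ext
    grind

lemma fiber_eq_empty (hk : m < #P) : fiber N m t P = ∅ := by
  refine filter_false_of_mem fun S hS hSP => ?_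
  have := card_le_card (hSP ▸ inter_subset_left : P ⊆ S)
  rw [(mem_bridges.mp hS).2] at this
  omega

lemma filter_mem_fiber (hP : P ⊆ range t) :
    {S ∈ fiber N m t P | t ∈ S} = fiber N m (t + 1) (insert t P) := by
  simp only [fiber, filter_filter]
  refine filter_congr fun S _ => ?_
  have := @hP
  simp only [Finset.ext_iff, mem_inter, mem_range, mem_insert, subset_iff] at this ⊢
  grind

lemma filter_not_mem_fiber (hP : P ⊆ range t) :
    {S ∈ fiber N m t P | t ∉ S} = fiber N m (t + 1) P := by
  simp only [fiber, filter_filter]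
  refine filter_congr fun S _ => ?_
  have := @hP
  simp only [Finset.ext_iff, mem_inter, mem_range, subset_iff] at this ⊢
  grind

lemma sum_fiber_eq_add {M : Type*} [AddCommMonoid M] (hP : P ⊆ range t) (f : Finset ℕ → M) :
    ∑ S ∈ fiber N m t P, f S
      = ∑ S ∈ fiber N m (t + 1) (insert t P), f S + ∑ S ∈ fiber N m (t + 1) P, f S := by
  rw [← filter_mem_fiber hP, ← filter_not_mem_fiber hP, sum_filter_add_sum_filter_not]

lemma card_fiber_eq_add (hP : P ⊆ range t) :
    #(fiber N m t P) = #(fiber N m (t + 1) (insert t P)) + #(fiber N m (t + 1) P) := by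
  simpa only [card_eq_sum_ones] using sum_fiber_eq_add hP fun _ => 1

lemma sum_fiber_height {M : Type*} [AddCommMonoid M] (φ : ℕ → M) :
    ∑ S ∈ fiber N m t P, φ (height t S) = #(fiber N m t P) • φ #P := by
  rw [sum_congr rfl fun S hS => by rw [height, (mem_filter.mp hS).2], sum_const]

lemma card_fiber_insert_mul (hP : P ⊆ range t) (ht : t < N) (hk : #P ≤ m) :
    #(fiber N m (t + 1) (insert t P)) * (N - t) = #(fiber N m t P) * (m - #P) := by
  have htP : t ∉ P := fun h => by simpa using hP h
  rcases hk.eq_or_lt with hk | hk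
  · rw [fiber_eq_empty (by rw [card_insert_of_notMem htP]; omega), hk]
    simp
  have hP' : insert t P ⊆ range (t + 1) :=
    insert_subset (by simp) (hP.trans (range_subset_range.mpr t.le_succ))
  rw [card_fiber hP' ht (by rw [card_insert_of_notMem htP]; omega), card_fiber hP ht.le hk.le,
    card_insert_of_notMem htP]
  have := Nat.add_one_mul_choose_eq (N - t - 1) (m - #P - 1)
  rw [show N - t - 1 + 1 = N - t by omega, show m - #P - 1 + 1 = m - #P by omega] at this
  rw [show N - (t + 1) = N - t - 1 by omega, show m - (#P + 1) = m - #P - 1 by omega, mul_comm,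
    this]

lemma cast_card_fiber_insert_mul (hP : P ⊆ range t) (ht : t < N) :
    (#(fiber N m (t + 1) (insert t P)) : ℝ) * (N - t)
      = (#(fiber N m (t + 1) (insert t P)) + #(fiber N m (t + 1) P)) * (m - #P) := by
  rcases le_or_gt #P m with hk | hk
  · rw [← Nat.cast_add, ← card_fiber_eq_add hP, ← Nat.cast_sub ht.le, ← Nat.cast_sub hk,
      ← Nat.cast_mul, ← Nat.cast_mul, card_fiber_insert_mul hP ht hk]
  · have htP : t ∉ P := fun h => by simpa using hP h
    rw [fiber_eq_empty hk, fiber_eq_empty (by rw [card_insert_of_notMem htP]; omega)]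
    simp

lemma bridgeMartingale_mean_eq {a b k m t N : ℝ} (hN : N ≠ 0) (ht : N - t - 1 ≠ 0)
    (ht' : N - t ≠ 0) (hw : a * (N - t) = (a + b) * (m - k)) :
    (a + b) * ((k - m * t / N) / (N - t))
      = a * ((k + 1 - m * (t + 1) / N) / (N - (t + 1)))
        + b * ((k - m * (t + 1) / N) / (N - (t + 1))) := by
  rw [show N - (t + 1) = N - t - 1 by ring]
  field_simp
  linear_combination -N * hw

/-- Given the first `t` steps, the next value of the bridge martingale is one of two values at
distance `1 / (N - t - 1)`, with weights `a`, `b` making its mean the present value `z`. -/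
lemma bridgeMartingale_fiber_two_point (hP : P ⊆ range t) (ht : t + 2 ≤ N) :
    ∃ a b x y z : ℝ, 0 ≤ a ∧ 0 ≤ b ∧ (a + b) * z = a * x + b * y ∧
      x - y = 1 / (N - t - 1) ∧
      ∀ F : ℝ → ℝ, ∑ S ∈ fiber N m t P, F (bridgeMartingale N m t S) = (a + b) * F z ∧
        ∑ S ∈ fiber N m t P, F (bridgeMartingale N m (t + 1) S) = a * F x + b * F y := by
  have htP : t ∉ P := fun h => by simpa using hP h
  have hNt : (t : ℝ) + 2 ≤ N := by exact_mod_cast ht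
  refine ⟨#(fiber N m (t + 1) (insert t P)), #(fiber N m (t + 1) P),
    (#P + 1 - m * (t + 1) / N) / (N - (t + 1)), (#P - m * (t + 1) / N) / (N - (t + 1)),
    (#P - m * t / N) / (N - t), by positivity, by positivity,
    bridgeMartingale_mean_eq (by linarith) (by linarith) (by linarith)
      (cast_card_fiber_insert_mul hP (by omega)),
    by rw [← sub_div]; ring_nf, fun F => ⟨?_, ?_⟩⟩
  · simp only [bridgeMartingale, deviation]
    rw [sum_fiber_height (fun h : ℕ => F ((h - m * t / N) / (N - t))), card_fiber_eq_add hP,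
      nsmul_eq_mul, Nat.cast_add]
  · simp only [bridgeMartingale, deviation]
    rw [sum_fiber_eq_add hP,
      sum_fiber_height (fun h : ℕ => F ((h - m * ↑(t + 1) / N) / (N - ↑(t + 1)))),
      sum_fiber_height (fun h : ℕ => F ((h - m * ↑(t + 1) / N) / (N - ↑(t + 1)))),
      card_insert_of_notMem htP]
    push_cast
    ring

lemma sum_fiber_exp_le_succ (hP : P ⊆ range t) (ht : t + 2 ≤ N) (l : ℝ) :
    ∑ S ∈ fiber N m t P, exp (l * bridgeMartingale N m t S)
      ≤ ∑ S ∈ fiber N m t P, exp (l * bridgeMartingale N m (t + 1) S) := by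
  obtain ⟨a, b, x, y, z, ha, hb, hz, -, hF⟩ := bridgeMartingale_fiber_two_point (m := m) hP ht
  rw [(hF fun u => exp (l * u)).1, (hF fun u => exp (l * u)).2]
  exact add_mul_exp_le_of_mean ha hb (by linear_combination l * hz)

lemma sum_fiber_exp_succ_le (hP : P ⊆ range t) (ht : t + 2 ≤ N) {l : ℝ}
    (hl : |l| ≤ N - t - 1) :
    ∑ S ∈ fiber N m t P, exp (l * bridgeMartingale N m (t + 1) S)
      ≤ (1 + (l / (N - t - 1)) ^ 2) *
          ∑ S ∈ fiber N m t P, exp (l * bridgeMartingale N m t S) := by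
  obtain ⟨a, b, x, y, z, ha, hb, hz, hxy, hF⟩ := bridgeMartingale_fiber_two_point (m := m) hP ht
  have hNt : (0 : ℝ) < N - t - 1 := by
    have : (t : ℝ) + 2 ≤ N := by exact_mod_cast ht
    linarith
  rw [(hF fun u => exp (l * u)).1, (hF fun u => exp (l * u)).2, ← sq_abs, abs_div,
    abs_of_pos hNt]
  refine mul_exp_add_mul_exp_le_of_mean ha hb (by linear_combination l * hz) ?_
    ((div_le_one hNt).mpr hl)
  rw [← mul_sub, hxy, abs_mul, abs_of_pos (one_div_pos.mpr hNt), mul_one_div]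

def DeterminedBy {β : Type*} (t : ℕ) (f : Finset ℕ → β) : Prop :=
  ∀ S, f (S ∩ range t) = f S

lemma DeterminedBy.mono {β : Type*} {f : Finset ℕ → β} {s : ℕ} (hf : DeterminedBy s f)
    (hst : s ≤ t) : DeterminedBy t f := fun S => by
  rw [← hf, inter_assoc, inter_eq_right.mpr (range_subset_range.mpr hst), hf]

lemma determinedBy_bridgeMartingale : DeterminedBy t (bridgeMartingale N m t) := fun S => by
  rw [bridgeMartingale, deviation, height, inter_assoc, inter_self]
  rfl

lemma sum_filter_le_sum_filter_of_fiber {f g : Finset ℕ → ℝ} {A : Finset ℕ → Prop}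
    [DecidablePred A] (hA : DeterminedBy t A)
    (h : ∀ P ⊆ range t, ∑ S ∈ fiber N m t P, f S ≤ ∑ S ∈ fiber N m t P, g S) :
    ∑ S ∈ bridges N m with A S, f S ≤ ∑ S ∈ bridges N m with A S, g S := by
  have hmaps : ∀ S ∈ {S ∈ bridges N m | A S}, S ∩ range t ∈ (range t).powerset :=
    fun S _ => mem_powerset.mpr inter_subset_right
  rw [← sum_fiberwise_of_maps_to hmaps f, ← sum_fiberwise_of_maps_to hmaps g]
  refine sum_le_sum fun P hP => ?_
  rw [filter_filter]
  by_cases hAP : A P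
  · have hfib : {S ∈ bridges N m | A S ∧ S ∩ range t = P} = fiber N m t P :=
      filter_congr fun S _ => ⟨And.right, fun hS => ⟨by rw [← hA, hS]; exact hAP, hS⟩⟩
    rw [hfib]
    exact h P (mem_powerset.mp hP)
  · have hfib : {S ∈ bridges N m | A S ∧ S ∩ range t = P} = ∅ :=
      filter_false_of_mem fun S _ hS => hAP (by rw [← hS.2, hA]; exact hS.1)
    simp [hfib]

/-- Submartingale property on `Ω` (with the uniform measure) for the filtration generated by the
first `t` steps, tested against the events determined by them. -/
def IsPrefixSubmartingale (Ω : Finset (Finset ℕ)) (X : ℕ → Finset ℕ → ℝ) (n : ℕ) :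
    Prop :=
  ∀ t < n, ∀ (A : Finset ℕ → Prop) [DecidablePred A], DeterminedBy t A →
    ∑ S ∈ Ω with A S, X t S ≤ ∑ S ∈ Ω with A S, X (t + 1) S

section Doob

variable {Ω : Finset (Finset ℕ)} {X : ℕ → Finset ℕ → ℝ} {n : ℕ}

lemma IsPrefixSubmartingale.mono {n' : ℕ} (hX : IsPrefixSubmartingale Ω X n') (hn : n ≤ n') :
    IsPrefixSubmartingale Ω X n := fun t ht => hX t (by omega)

lemma IsPrefixSubmartingale.sum_filter_le {A : Finset ℕ → Prop} [DecidablePred A] {s : ℕ}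
    (hX : IsPrefixSubmartingale Ω X n) (hA : DeterminedBy s A) (hst : s ≤ t) (htn : t ≤ n) :
    ∑ S ∈ Ω with A S, X s S ≤ ∑ S ∈ Ω with A S, X t S := by
  induction t, hst using Nat.le_induction with
  | base => exact le_rfl
  | succ t hst ih => exact (ih (by omega)).trans (hX t (by omega) A (hA.mono hst))

theorem IsPrefixSubmartingale.maximal_ineq (hX : IsPrefixSubmartingale Ω X n)
    (hadapt : ∀ t, DeterminedBy t (X t)) (hnonneg : ∀ t S, 0 ≤ X t S) {c : ℝ}
    (hc : 0 ≤ c) :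
    c * #{S ∈ Ω | ∃ t ≤ n, c ≤ X t S} ≤ ∑ S ∈ Ω, X n S := by
  classical
  let hit (s : ℕ) : Finset ℕ → Prop := fun S => c ≤ X s S ∧ ∀ r < s, X r S < c
  have hhit : ∀ s, DeterminedBy s (hit s) := fun s S => by
    simp only [hit, hadapt s S]
    exact propext (and_congr_right fun _ => forall₂_congr fun r hr => by
      rw [(hadapt r).mono hr.le S])
  have hcover : {S ∈ Ω | ∃ t ≤ n, c ≤ X t S}
      ⊆ (range (n + 1)).biUnion fun s => {S ∈ Ω | hit s S} := by
    intro S hS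
    obtain ⟨hSΩ, hex⟩ := mem_filter.mp hS
    have hfind := Nat.find_spec hex
    refine mem_biUnion.mpr ⟨Nat.find hex, mem_range.mpr (Nat.lt_succ_of_le hfind.1),
      mem_filter.mpr ⟨hSΩ, hfind.2, fun r hr => ?_⟩⟩
    exact lt_of_not_ge fun h => Nat.find_min hex hr ⟨hr.le.trans hfind.1, h⟩
  have hdisj : (range (n + 1) : Set ℕ).PairwiseDisjoint fun s => {S ∈ Ω | hit s S} := by
    intro s _ r _ hsr
    refine disjoint_filter.mpr fun S _ hs hr => ?_
    rcases hsr.lt_or_gt with h | h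
    · exact (hr.2 s h).not_ge hs.1
    · exact (hs.2 r h).not_ge hr.1
  calc c * #{S ∈ Ω | ∃ t ≤ n, c ≤ X t S}
      ≤ c * ∑ s ∈ range (n + 1), #{S ∈ Ω | hit s S} := by
        gcongr
        exact_mod_cast (card_le_card hcover).trans_eq (card_biUnion hdisj)
    _ ≤ ∑ s ∈ range (n + 1), ∑ S ∈ Ω with hit s S, X s S := by
        rw [Nat.cast_sum, mul_sum]
        refine sum_le_sum fun s _ => ?_
        rw [mul_comm, ← nsmul_eq_mul, ← sum_const]
        exact sum_le_sum fun S hS => (mem_filter.mp hS).2.1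
    _ ≤ ∑ s ∈ range (n + 1), ∑ S ∈ Ω with hit s S, X n S :=
        sum_le_sum fun s hs =>
          hX.sum_filter_le (hhit s) (by simpa [Nat.lt_succ_iff] using hs) le_rfl
    _ = ∑ S ∈ (range (n + 1)).biUnion fun s => {S ∈ Ω | hit s S}, X n S :=
        (sum_biUnion hdisj).symm
    _ ≤ ∑ S ∈ Ω, X n S :=
        sum_le_sum_of_subset_of_nonneg (biUnion_subset.mpr fun s _ => filter_subset _ _)
          fun _ _ _ => hnonneg _ _

end Doob

lemma isPrefixSubmartingale_exp_bridgeMartingale (l : ℝ) :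
    IsPrefixSubmartingale (bridges N m) (fun t S => exp (l * bridgeMartingale N m t S)) (N - 1) :=
  fun t ht A _ hA => sum_filter_le_sum_filter_of_fiber hA fun P hP =>
    sum_fiber_exp_le_succ hP (by omega) l

lemma bridgeMartingale_zero (S : Finset ℕ) : bridgeMartingale N m 0 S = 0 := by
  simp [bridgeMartingale, deviation, height]

lemma sum_exp_bridgeMartingale_le_pow {l : ℝ} (hl : |l| ≤ N / 2) (ht : 2 * t ≤ N) :
    ∑ S ∈ bridges N m, exp (l * bridgeMartingale N m t S)
      ≤ (1 + (2 * l / N) ^ 2) ^ t * #(bridges N m) := by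
  induction t with
  | zero => simp [bridgeMartingale_zero]
  | succ t ih =>
    have hNt : (N : ℝ) / 2 ≤ N - t - 1 := by
      have : 2 * ((t : ℝ) + 1) ≤ N := by exact_mod_cast ht
      linarith
    have hN : (0 : ℝ) < N / 2 := by
      have : (2 : ℝ) ≤ N := by exact_mod_cast (by omega : 2 ≤ N)
      linarith
    have hstep : ∑ S ∈ bridges N m, exp (l * bridgeMartingale N m (t + 1) S)
        ≤ (1 + (l / (N - t - 1)) ^ 2) *
            ∑ S ∈ bridges N m, exp (l * bridgeMartingale N m t S) := by
      have := sum_filter_le_sum_filter_of_fiber (A := fun _ => True)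
        (g := fun S => (1 + (l / (N - t - 1)) ^ 2) * exp (l * bridgeMartingale N m t S))
        (fun _ => rfl)
        fun P hP => (sum_fiber_exp_succ_le hP (by omega) (hl.trans hNt)).trans_eq (mul_sum _ _ _)
      rwa [filter_true_of_mem fun _ _ => trivial, ← mul_sum] at this
    have hfactor : (l / (N - t - 1)) ^ 2 ≤ (2 * l / N) ^ 2 := by
      rw [div_pow, show 2 * l / N = l / (N / 2) by ring, div_pow]
      gcongr
    calc ∑ S ∈ bridges N m, exp (l * bridgeMartingale N m (t + 1) S)
        ≤ (1 + (l / (N - t - 1)) ^ 2) *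
            ∑ S ∈ bridges N m, exp (l * bridgeMartingale N m t S) := hstep
      _ ≤ (1 + (2 * l / N) ^ 2) * ((1 + (2 * l / N) ^ 2) ^ t * #(bridges N m)) := by
        gcongr
        exact ih (by omega)
      _ = (1 + (2 * l / N) ^ 2) ^ (t + 1) * #(bridges N m) := by ring

lemma sum_exp_bridgeMartingale_le_exp {l : ℝ} (hl : |l| ≤ N / 2) (ht : 2 * t ≤ N) :
    ∑ S ∈ bridges N m, exp (l * bridgeMartingale N m t S)
      ≤ exp (2 * l ^ 2 / N) * #(bridges N m) := by
  refine (sum_exp_bridgeMartingale_le_pow hl ht).trans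
    (mul_le_mul_of_nonneg_right ?_ (by positivity))
  calc (1 + (2 * l / N) ^ 2) ^ t ≤ exp ((2 * l / N) ^ 2) ^ t := by
        gcongr
        linarith [add_one_le_exp ((2 * l / N) ^ 2)]
    _ = exp (t * (2 * l / N) ^ 2) := (exp_nat_mul _ t).symm
    _ ≤ exp (2 * l ^ 2 / N) := by
        gcongr
        rcases (Nat.zero_le N).eq_or_lt with hN | hN
        · simp [← hN]
        have hN' : (0 : ℝ) < N := by exact_mod_cast hN
        have : 2 * (t : ℝ) ≤ N := by exact_mod_cast ht
        rw [div_pow, mul_div_assoc', div_le_div_iff₀ (by positivity) hN']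
        nlinarith [mul_le_mul_of_nonneg_left this (by positivity : 0 ≤ 2 * l ^ 2 * N)]

lemma card_exists_deviation_ge_le {M : ℝ} (hM : 0 < M) (hMN : M ≤ 2 * N) :
    (#{S ∈ bridges N m | ∃ t ≤ N / 2, M ≤ deviation N m t S} : ℝ)
      ≤ exp (-(M ^ 2 / (8 * N))) * #(bridges N m) := by
  have hN : (0 : ℝ) < N := by linarith
  set l := M / 4 with hl
  have hsub : {S ∈ bridges N m | ∃ t ≤ N / 2, M ≤ deviation N m t S}
      ⊆ {S ∈ bridges N m |
          ∃ t ≤ N / 2, exp (l * (M / N)) ≤ exp (l * bridgeMartingale N m t S)} := by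
    refine monotone_filter_right _ fun S _ ⟨t, ht, hdev⟩ => ⟨t, ht, ?_⟩
    have hNt : (0 : ℝ) < N - t := by
      have : 2 * (t : ℝ) ≤ N := by exact_mod_cast (by omega : 2 * t ≤ N)
      linarith
    gcongr
    exact div_le_div₀ (hM.le.trans hdev) hdev hNt (by linarith [t.cast_nonneg (α := ℝ)])
  have hdoob := ((isPrefixSubmartingale_exp_bridgeMartingale (N := N) (m := m) l).mono
    (n := N / 2) (by omega)).maximal_ineq
    (fun t S => congrArg (fun u => exp (l * u)) (determinedBy_bridgeMartingale S))
    (fun _ _ => (exp_pos _).le) (exp_pos (l * (M / N))).le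
  have hmgf := sum_exp_bridgeMartingale_le_exp (N := N) (m := m) (l := l) (t := N / 2)
    (by rw [abs_of_pos (by positivity)]; linarith) (by omega)
  calc (#{S ∈ bridges N m | ∃ t ≤ N / 2, M ≤ deviation N m t S} : ℝ)
      = exp (-(l * (M / N))) * (exp (l * (M / N))
          * #{S ∈ bridges N m | ∃ t ≤ N / 2, M ≤ deviation N m t S}) := by
        rw [← mul_assoc, ← exp_add, neg_add_cancel, exp_zero, one_mul]
    _ ≤ exp (-(l * (M / N))) * (exp (2 * l ^ 2 / N) * #(bridges N m)) := by
        refine mul_le_mul_of_nonneg_left ?_ (exp_pos _).le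
        exact (mul_le_mul_of_nonneg_left (Nat.cast_le.mpr (card_le_card hsub))
          (exp_pos _).le).trans (hdoob.trans hmgf)
    _ = exp (-(M ^ 2 / (8 * N))) * #(bridges N m) := by
        rw [← mul_assoc, ← exp_add]
        congr 2
        field_simp
        ring

def flipSteps (N : ℕ) (S : Finset ℕ) : Finset ℕ := range N \ S

def reverseSteps (N : ℕ) (S : Finset ℕ) : Finset ℕ := S.image (N - 1 - ·)

lemma flipSteps_mem_bridges (hS : S ∈ bridges N m) : flipSteps N S ∈ bridges N (N - m) := by
  obtain ⟨hSN, hSm⟩ := mem_bridges.mp hS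
  exact mem_bridges.mpr
    ⟨sdiff_subset, by rw [flipSteps, card_sdiff_of_subset hSN, hSm, card_range]⟩

lemma flipSteps_injOn : Set.InjOn (flipSteps N) (bridges N m) := fun S hS T hT hST => by
  rw [← Finset.sdiff_sdiff_eq_self (mem_bridges.mp hS).1,
    ← Finset.sdiff_sdiff_eq_self (mem_bridges.mp hT).1]
  exact congrArg (range N \ ·) hST

lemma deviation_flipSteps (hN : 0 < N) (hm : m ≤ N) (ht : t ≤ N) :
    deviation N (N - m) t (flipSteps N S) = -deviation N m t S := by
  have hheight : height t (flipSteps N S) + height t S = t := by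
    have : flipSteps N S ∩ range t = range t \ S := by
      ext
      simp only [flipSteps, mem_inter, mem_sdiff, mem_range]
      exact ⟨fun h => ⟨h.2, h.1.2⟩, fun h => ⟨⟨by omega, h.2⟩, h.1⟩⟩
    rw [height, height, this, inter_comm, card_sdiff_add_card_inter, card_range]
  have hheight' : (height t (flipSteps N S) : ℝ) = t - height t S :=
    eq_sub_of_add_eq (by exact_mod_cast hheight)
  have hN' : (N : ℝ) ≠ 0 := by positivity
  rw [deviation, deviation, hheight', Nat.cast_sub hm]
  field_simp
  ring

lemma reverseSteps_mem_bridges (hS : S ∈ bridges N m) : reverseSteps N S ∈ bridges N m := by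
  obtain ⟨hSN, hSm⟩ := mem_bridges.mp hS
  refine mem_bridges.mpr ⟨fun x hx => ?_, ?_⟩
  · obtain ⟨i, hi, rfl⟩ := mem_image.mp hx
    have := mem_range.mp (hSN hi)
    exact mem_range.mpr (by omega)
  · rw [reverseSteps, card_image_of_injOn fun i hi j hj hij => by
      have := mem_range.mp (hSN hi); have := mem_range.mp (hSN hj); omega, hSm]

lemma reverseSteps_reverseSteps (hS : S ⊆ range N) : reverseSteps N (reverseSteps N S) = S := by
  ext x
  simp only [reverseSteps, mem_image]
  constructor
  · rintro ⟨_, ⟨i, hi, rfl⟩, rfl⟩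
    have := mem_range.mp (hS hi)
    rwa [show N - 1 - (N - 1 - i) = i by omega]
  · intro hx
    have := mem_range.mp (hS hx)
    exact ⟨N - 1 - x, ⟨x, hx, rfl⟩, by omega⟩

lemma reverseSteps_injOn : Set.InjOn (reverseSteps N) (bridges N m) := fun S hS T hT hST => by
  rw [← reverseSteps_reverseSteps (mem_bridges.mp hS).1, hST,
    reverseSteps_reverseSteps (mem_bridges.mp hT).1]

lemma deviation_reverseSteps (hN : 0 < N) (hS : S ∈ bridges N m) (ht : t ≤ N) :
    deviation N m t (reverseSteps N S) = -deviation N m (N - t) S := by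
  obtain ⟨hSN, hSm⟩ := mem_bridges.mp hS
  have hheight : height t (reverseSteps N S) + height (N - t) S = m := by
    have : reverseSteps N S ∩ range t = (S \ range (N - t)).image (N - 1 - ·) := by
      ext y
      simp only [reverseSteps, mem_inter, mem_image, mem_sdiff, mem_range]
      constructor
      · rintro ⟨⟨i, hi, rfl⟩, hy⟩
        have := mem_range.mp (hSN hi)
        exact ⟨i, ⟨hi, by omega⟩, rfl⟩
      · rintro ⟨i, ⟨hi, hit⟩, rfl⟩
        have := mem_range.mp (hSN hi)
        exact ⟨⟨i, hi, rfl⟩, by omega⟩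
    rw [height, height, this, card_image_of_injOn fun i hi j hj hij => by
      have := mem_range.mp (hSN (mem_sdiff.mp hi).1); have := mem_range.mp (hSN (mem_sdiff.mp hj).1)
      omega, card_sdiff_add_card_inter, hSm]
  have hheight' : (height t (reverseSteps N S) : ℝ) = m - height (N - t) S :=
    eq_sub_of_add_eq (by exact_mod_cast hheight)
  have hN' : (N : ℝ) ≠ 0 := by positivity
  rw [deviation, deviation, hheight', Nat.cast_sub ht]
  field_simp
  ring

lemma card_exists_neg_deviation_ge_le {M : ℝ} (hm : m ≤ N) (hM : 0 < M) (hMN : M ≤ 2 * N) :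
    (#{S ∈ bridges N m | ∃ t ≤ N / 2, M ≤ -deviation N m t S} : ℝ)
      ≤ exp (-(M ^ 2 / (8 * N))) * #(bridges N m) := by
  have hN : 0 < N := by exact_mod_cast (by linarith : (0 : ℝ) < N)
  have hflip : #{S ∈ bridges N m | ∃ t ≤ N / 2, M ≤ -deviation N m t S}
      ≤ #{S ∈ bridges N (N - m) | ∃ t ≤ N / 2, M ≤ deviation N (N - m) t S} := by
    refine card_le_card_of_injOn (flipSteps N) (fun S hS => ?_)
      (flipSteps_injOn.mono (filter_subset _ _))
    obtain ⟨hS, t, ht, hdev⟩ := mem_filter.mp hS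
    refine mem_filter.mpr ⟨flipSteps_mem_bridges hS, t, ht, ?_⟩
    rwa [deviation_flipSteps hN hm (by omega)]
  have hcard : #(bridges N (N - m)) = #(bridges N m) := by
    rw [card_bridges, card_bridges, Nat.choose_symm hm]
  exact (Nat.cast_le.mpr hflip).trans (hcard ▸ card_exists_deviation_ge_le hM hMN)

lemma card_exists_deviation_sub_le (hN : 0 < N) (Q : ℝ → Prop) [DecidablePred Q] :
    #{S ∈ bridges N m | ∃ t ≤ N / 2, Q (deviation N m (N - t) S)}
      ≤ #{S ∈ bridges N m | ∃ t ≤ N / 2, Q (-deviation N m t S)} := by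
  refine card_le_card_of_injOn (reverseSteps N) (fun S hS => ?_)
    (reverseSteps_injOn.mono (filter_subset _ _))
  obtain ⟨hS, t, ht, hQ⟩ := mem_filter.mp hS
  refine mem_filter.mpr ⟨reverseSteps_mem_bridges hS, t, ht, ?_⟩
  rwa [deviation_reverseSteps hN hS (by omega), neg_neg]

lemma card_exists_abs_deviation_gt_le {M : ℝ} (hm : m ≤ N) (hM : 0 < M) :
    (#{S ∈ bridges N m | ∃ t ≤ N, M < |deviation N m t S|} : ℝ)
      ≤ 4 * exp (-(M ^ 2 / (8 * N))) * #(bridges N m) := by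
  rcases le_or_gt (N : ℝ) M with hNM | hMN
  · have hempty : {S ∈ bridges N m | ∃ t ≤ N, M < |deviation N m t S|} = ∅ :=
      filter_false_of_mem fun S hS ⟨t, ht, hdev⟩ => (abs_deviation_le hS ht).not_gt
        (by linarith [(Nat.cast_le (α := ℝ)).mpr hm])
    rw [hempty, card_empty, Nat.cast_zero]
    positivity
  have hN : 0 < N := by exact_mod_cast (hM.trans hMN)
  have hcover : {S ∈ bridges N m | ∃ t ≤ N, M < |deviation N m t S|}
      ⊆ ({S ∈ bridges N m | ∃ t ≤ N / 2, M ≤ deviation N m t S}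
          ∪ {S ∈ bridges N m | ∃ t ≤ N / 2, M ≤ -deviation N m t S})
        ∪ ({S ∈ bridges N m | ∃ t ≤ N / 2, M ≤ deviation N m (N - t) S}
          ∪ {S ∈ bridges N m | ∃ t ≤ N / 2, M ≤ -deviation N m (N - t) S}) := by
    intro S hS
    obtain ⟨hS, t, ht, hdev⟩ := mem_filter.mp hS
    simp only [mem_union, mem_filter, hS, true_and]
    rcases le_or_gt t (N / 2) with htN | htN
    · exact .inl ((lt_abs.mp hdev).imp (fun h => ⟨t, htN, h.le⟩) fun h => ⟨t, htN, h.le⟩)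
    · rw [← Nat.sub_sub_self ht] at hdev
      exact .inr ((lt_abs.mp hdev).imp (fun h => ⟨N - t, by omega, h.le⟩)
        fun h => ⟨N - t, by omega, h.le⟩)
  have hrev₁ := card_exists_deviation_sub_le (m := m) hN (M ≤ ·)
  have hrev₂ := card_exists_deviation_sub_le (m := m) hN (M ≤ -·)
  simp only [neg_neg] at hrev₂
  have hcard := (card_le_card hcover).trans
    ((card_union_le _ _).trans (add_le_add (card_union_le _ _) (card_union_le _ _)))
  have hup := card_exists_deviation_ge_le (m := m) hM (by linarith)
  have hdown := card_exists_neg_deviation_ge_le hm hM (by linarith)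
  have : (#{S ∈ bridges N m | ∃ t ≤ N, M < |deviation N m t S|} : ℝ)
      ≤ 2 * (#{S ∈ bridges N m | ∃ t ≤ N / 2, M ≤ deviation N m t S}
        + #{S ∈ bridges N m | ∃ t ≤ N / 2, M ≤ -deviation N m t S} : ℕ) := by
    exact_mod_cast (by omega)
  push_cast at this
  linarith

def toPath (N : ℕ) (S : Finset ℕ) : Fin (N + 1) → ℤ := fun j => height j S

lemma toPath_mem_pathSet (hS : S ∈ bridges N m) : toPath N S ∈ pathSet N 0 m := by
  obtain ⟨hSN, hSm⟩ := mem_bridges.mp hS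
  refine ⟨fun j => ?_, by simp [toPath, height],
    by simp [toPath, height_of_subset_range hSN, hSm]⟩
  simp only [toPath, Fin.val_succ, Fin.val_castSucc, height_succ]
  split_ifs <;> simp

lemma mem_iff_height_succ (i : ℕ) (S : Finset ℕ) :
    i ∈ S ↔ height (i + 1) S = height i S + 1 := by
  rw [height_succ]
  split_ifs with h <;> simp [h]

lemma toPath_injOn : Set.InjOn (toPath N) (bridges N m) := fun S hS T hT hST => by
  ext i
  by_cases hi : i < N
  · have hheight : ∀ j ≤ N, height j S = height j T := fun j hj => by
      simpa [toPath] using congrFun hST ⟨j, Nat.lt_succ_of_le hj⟩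
    rw [mem_iff_height_succ, mem_iff_height_succ, hheight i hi.le, hheight (i + 1) hi]
  · exact iff_of_false (fun h => hi (mem_range.mp ((mem_bridges.mp hS).1 h)))
      fun h => hi (mem_range.mp ((mem_bridges.mp hT).1 h))

lemma exists_toPath_eq {L : Fin (N + 1) → ℤ} (hL : L ∈ pathSet N 0 m) :
    ∃ S ∈ bridges N m, toPath N S = L := by
  obtain ⟨hpath, h0, hN⟩ := hL
  let S := (univ.filter fun j : Fin N => L j.succ = L j.castSucc + 1).map Fin.valEmbedding
  have hSN : S ⊆ range N := fun i hi => by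
    obtain ⟨j, -, rfl⟩ := mem_map.mp hi
    exact mem_range.mpr j.isLt
  have hmem : ∀ j : Fin N, (j : ℕ) ∈ S ↔ L j.succ = L j.castSucc + 1 := fun j => by
    simp [S, Fin.val_inj]
  have hheight : ∀ j : Fin (N + 1), (height j S : ℤ) = L j := by
    refine Fin.induction (by simp [height, h0]) fun j ih => ?_
    rw [Fin.val_castSucc] at ih
    rw [Fin.val_succ, height_succ, Nat.cast_add, ih]
    rcases hpath j with h | h
    · rw [if_neg fun hj => by have := (hmem j).mp hj; omega, h]
      simp
    · rw [if_pos ((hmem j).mpr h), h]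
      simp
  refine ⟨S, mem_bridges.mpr ⟨hSN, ?_⟩, funext hheight⟩
  have := hheight (Fin.last N)
  rw [Fin.val_last, height_of_subset_range hSN, hN] at this
  exact_mod_cast this

lemma pathSet_eq_image : pathSet N 0 m = toPath N '' bridges N m :=
  Set.ext fun _ =>
    ⟨fun hL => exists_toPath_eq hL, fun ⟨_, hS, hL⟩ => hL ▸ toPath_mem_pathSet hS⟩

lemma toPath_mem_iff {M : ℝ} :
    toPath N S ∈
        {L : Fin (N + 1) → ℤ | ∀ j : Fin (N + 1), |(L j : ℝ) - m * (j : ℕ) / N| ≤ M}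
      ↔ ¬∃ t ≤ N, M < |deviation N m t S| := by
  simp only [Set.mem_ofPred_eq, toPath, Int.cast_natCast, not_exists, not_and, not_lt]
  exact ⟨fun h t ht => h ⟨t, Nat.lt_succ_of_le ht⟩,
    fun h j => h j (Nat.le_of_lt_succ j.isLt)⟩

end BernoulliBridge

open BernoulliBridge in
theorem stmt18 :
    ∃ C c : ℝ, 0 < C ∧ 0 < c ∧
      ∀ N : ℕ, 1 ≤ N → ∀ m : ℕ, m ≤ N → ∀ M : ℝ, 0 < M →
        unifProb (pathSet N 0 (m : ℤ))
            {L | ∀ j : Fin (N+1), |(L j : ℝ) - (m : ℝ) * (j : ℕ) / (N : ℝ)| ≤ M} ≥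
          1 - C * Real.exp (-(c * M ^ 2 / (N : ℝ))) := by
  refine ⟨4, 1 / 8, by norm_num, by norm_num, fun N _ m hm M hM => ?_⟩
  classical
  have hΩ : (0 : ℝ) < #(bridges N m) := by
    rw [card_bridges]
    exact_mod_cast Nat.choose_pos hm
  have hsplit : (#{S ∈ bridges N m | ∃ t ≤ N, M < |deviation N m t S|} : ℝ)
      + #{S ∈ bridges N m | ¬∃ t ≤ N, M < |deviation N m t S|} = #(bridges N m) := by
    exact_mod_cast card_filter_add_card_filter_not _
  rw [pathSet_eq_image, unifProb_image toPath_injOn, filter_congr fun S _ => toPath_mem_iff,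
    ge_iff_le, le_div_iff₀ hΩ, show 1 / 8 * M ^ 2 / N = M ^ 2 / (8 * N) by ring]
  linarith [card_exists_abs_deviation_gt_le hm hM]
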